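/- Fix a real number λ ≠ 0. For every integer n ≥ 0 and every real x, the Jindalrae polynomial satisfies J_{n,λ}(x) = Σ_{m=0}^{n} B_{m,λ}(x) S_{2,λ}(n,m). -/

import Mathlib

open Finset

/-- The degenerate falling factorial `(x)_{n,λ} = x(x−λ)⋯(x−(n−1)λ)`;
for `lam = 1` it is the ordinary falling factorial `(x)_n`. -/
noncomputable def dff (lam : ℝ) (n : ℕ) (x : ℝ) : ℝ :=
  ∏ i ∈ Finset.range n, (x - i * lam)

/-- The degenerate exponential `e_λ^x(t) = Σ_{n≥0} (x)_{n,λ} t^n/n!`. -/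
noncomputable def degExp (lam x : ℝ) : PowerSeries ℝ :=
  PowerSeries.mk fun n => dff lam n x / n.factorial

/-- The degenerate logarithm `log_λ(1+t) = Σ_{n≥1} λ^{n−1}(1)_{n,1/λ} t^n/n!`. -/
noncomputable def degLog (lam : ℝ) : PowerSeries ℝ :=
  PowerSeries.mk fun n =>
    if n = 0 then 0 else lam ^ (n - 1) * dff (1 / lam) n 1 / n.factorial

/-- Composition `f(g(t))` of formal power series (valid definition of composition
when `g` has zero constant term, as in all uses below). -/
noncomputable def pscomp (f g : PowerSeries ℝ) : PowerSeries ℝ :=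
  PowerSeries.mk fun n =>
    ∑ k ∈ Finset.range (n + 1), (PowerSeries.coeff k f) * (PowerSeries.coeff n (g ^ k))

/-! With `g = e_λ(t) - 1`, the inner series `e_λ(g) - 1` is `(e_λ - 1) ∘ g`, so by associativity
of composition the Jindalrae series is the Bell series composed with `g`:
`J_{n,λ}(x)/n! = Σ_m B_{m,λ}(x)/m! · [tⁿ] gᵐ`. On the other hand, expanding `e_λ^j = (1 + g)^j`
binomially for `j ∈ ℕ` gives `(j)_{n,λ} = Σ_m (n!/m! · [tⁿ] gᵐ) (j)_m`, and falling factorials are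
linearly independent as functions on `ℕ`, so `S_{2,λ}(n,m) = n!/m! · [tⁿ] gᵐ`. -/

open PowerSeries

section Composition

theorem coeff_pow_eq_zero_of_lt {R : Type*} [CommSemiring R] {g : R⟦X⟧}
    (hg : constantCoeff g = 0) {n k : ℕ} (h : n < k) : coeff n (g ^ k) = 0 :=
  coeff_of_lt_order n <| (Nat.cast_lt.mpr h).trans_le (le_order_pow_of_constantCoeff_eq_zero k hg)

theorem pscomp_eq_subst {g : ℝ⟦X⟧} (hg : constantCoeff g = 0) (f : ℝ⟦X⟧) :
    pscomp f g = f.subst g := by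
  ext n
  rw [coeff_subst' (HasSubst.of_constantCoeff_zero' hg), pscomp, coeff_mk]
  refine (finsum_eq_sum_of_support_subset _ fun k hk => ?_).symm
  by_contra hkn
  simp only [coe_range, Set.mem_Iio, not_lt] at hkn
  exact hk (by simp [coeff_pow_eq_zero_of_lt hg (Nat.lt_of_succ_le hkn)])

theorem pscomp_sub_one {g : ℝ⟦X⟧} (hg : constantCoeff g = 0) (f : ℝ⟦X⟧) :
    pscomp (f - 1) g = pscomp f g - 1 := by
  have hs := HasSubst.of_constantCoeff_zero' hg
  rw [pscomp_eq_subst hg, pscomp_eq_subst hg, subst_sub hs, ← coe_substAlgHom hs, map_one]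

theorem pscomp_pscomp {e g : ℝ⟦X⟧} (he : constantCoeff e = 0) (hg : constantCoeff g = 0)
    (f : ℝ⟦X⟧) : pscomp (pscomp f e) g = pscomp f (pscomp e g) := by
  have heg : constantCoeff (pscomp e g) = 0 := by
    rw [pscomp_eq_subst hg]
    exact constantCoeff_subst_eq_zero hg e he
  rw [pscomp_eq_subst heg, pscomp_eq_subst he, pscomp_eq_subst hg, pscomp_eq_subst hg,
    subst_comp_subst_apply (HasSubst.of_constantCoeff_zero' he)
      (HasSubst.of_constantCoeff_zero' hg)]

end Composition

section DegenerateFallingFactorial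

theorem dff_succ (lam : ℝ) (n : ℕ) (x : ℝ) : dff lam (n + 1) x = dff lam n x * (x - n * lam) :=
  prod_range_succ _ n

theorem dff_zero_right (lam : ℝ) {n : ℕ} (hn : n ≠ 0) : dff lam n 0 = 0 :=
  prod_eq_zero (mem_range.mpr (Nat.pos_of_ne_zero hn)) (by simp)

theorem dff_one_natCast (k j : ℕ) : dff 1 k j = j.descFactorial k := by
  rw [← descPochhammer_eval_eq_descFactorial, descPochhammer_eval_eq_prod_range, dff]
  simp

theorem dff_add (lam x y : ℝ) (n : ℕ) :
    dff lam n (x + y) =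
      ∑ ij ∈ antidiagonal n, (n.choose ij.1 : ℝ) * (dff lam ij.1 x * dff lam ij.2 y) := by
  induction n with
  | zero => simp [dff]
  | succ n ih =>
    rw [sum_antidiagonal_choose_succ_mul (fun i j => dff lam i x * dff lam j y), dff_succ, ih,
      sum_mul, ← sum_add_distrib]
    -- on `i + j = n`, the factor `x + y - nλ` splits as `(x - iλ) + (y - jλ)`
    refine sum_congr rfl fun ij hij => ?_
    rw [HasAntidiagonal.mem_antidiagonal] at hij
    rw [← Nat.choose_symm_of_eq_add hij.symm, dff_succ, dff_succ]
    have hn : (n : ℝ) = ij.1 + ij.2 := by exact_mod_cast hij.symm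
    rw [hn]
    ring

end DegenerateFallingFactorial

section DegenerateExponential

theorem coeff_degExp (lam x : ℝ) (n : ℕ) : coeff n (degExp lam x) = dff lam n x / n.factorial :=
  coeff_mk _ _

theorem degExp_add (lam x y : ℝ) : degExp lam (x + y) = degExp lam x * degExp lam y := by
  ext n
  rw [coeff_mul, coeff_degExp, dff_add, sum_div]
  refine sum_congr rfl fun ij hij => ?_
  rw [HasAntidiagonal.mem_antidiagonal] at hij
  subst hij
  rw [coeff_degExp, coeff_degExp, Nat.cast_choose ℝ (Nat.le_add_right _ _), Nat.add_sub_cancel_left]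
  field_simp

theorem degExp_zero (lam : ℝ) : degExp lam 0 = 1 := by
  ext n
  rw [coeff_degExp, coeff_one]
  rcases eq_or_ne n 0 with rfl | hn
  · simp [dff]
  · simp [dff_zero_right lam hn, hn]

theorem degExp_natCast (lam : ℝ) (j : ℕ) : degExp lam j = degExp lam 1 ^ j := by
  induction j with
  | zero => simp [degExp_zero]
  | succ j ih => rw [Nat.cast_succ, degExp_add, ih, pow_succ]

theorem constantCoeff_degExp_sub_one (lam : ℝ) : constantCoeff (degExp lam 1 - 1) = 0 := by
  rw [← coeff_zero_eq_constantCoeff_apply, map_sub, coeff_degExp]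
  simp [dff]

end DegenerateExponential

section DegenerateStirling

theorem eq_zero_of_sum_mul_descFactorial_eq_zero {R : Type*} [CommRing R] [IsDomain R]
    [CharZero R] {n : ℕ} {c : ℕ → R}
    (h : ∀ j : ℕ, ∑ k ∈ range (n + 1), c k * j.descFactorial k = 0) {m : ℕ} (hm : m ≤ n) :
    c m = 0 := by
  induction m using Nat.strong_induction_on with
  | _ m ih =>
    have hsingle : ∑ k ∈ range (n + 1), c k * m.descFactorial k = c m * m.factorial := by
      rw [sum_eq_single_of_mem m (mem_range.mpr (Nat.lt_succ_of_le hm)), Nat.descFactorial_self]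
      intro k _ hkm
      rcases lt_or_gt_of_ne hkm with hk | hk
      · rw [ih k hk (hk.le.trans hm), zero_mul]
      · rw [(Nat.descFactorial_eq_zero_iff_lt).mpr hk, Nat.cast_zero, mul_zero]
    have hsum := h m
    rw [hsingle] at hsum
    exact (mul_eq_zero.mp hsum).resolve_right (Nat.cast_ne_zero.mpr m.factorial_ne_zero)

theorem dff_natCast_eq_sum (lam : ℝ) (n j : ℕ) :
    dff lam n j = ∑ k ∈ range (n + 1),
      ((n.factorial : ℝ) / k.factorial * coeff n ((degExp lam 1 - 1) ^ k)) *
        (j.descFactorial k : ℝ) := by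
  have hg := constantCoeff_degExp_sub_one lam
  set g := degExp lam 1 - 1
  set f : ℕ → ℝ := fun k => n.factorial * (coeff n (g ^ k) * j.choose k)
  have hterm : ∀ k, ((n.factorial : ℝ) / k.factorial * coeff n (g ^ k)) *
      (j.descFactorial k : ℝ) = f k := by
    intro k
    simp only [f]
    rw [Nat.descFactorial_eq_factorial_mul_choose]
    push_cast
    field_simp
  have hbinomial : coeff n (degExp lam j) = ∑ k ∈ range (j + 1), coeff n (g ^ k) * j.choose k := by
    rw [degExp_natCast, ← sub_add_cancel (degExp lam 1) 1, add_pow, map_sum]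
    refine sum_congr rfl fun k _ => ?_
    rw [one_pow, mul_one, ← map_natCast C (j.choose k), coeff_mul_C]
  have hvanish : ∀ k, (j < k ∨ n < k) → f k = 0 := by
    rintro k (hk | hk)
    · simp [f, Nat.choose_eq_zero_of_lt hk]
    · simp [f, coeff_pow_eq_zero_of_lt hg hk]
  calc dff lam n j = n.factorial * coeff n (degExp lam j) := by
        rw [coeff_degExp]
        field_simp
    _ = ∑ k ∈ range (j + 1), f k := by rw [hbinomial, mul_sum]
    _ = ∑ k ∈ range (n + j + 1), f k :=
        sum_subset (range_subset_range.2 (by omega))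
          fun k _ hk => hvanish k (.inl (by simpa using hk))
    _ = ∑ k ∈ range (n + 1), f k :=
        (sum_subset (range_subset_range.2 (by omega))
          fun k _ hk => hvanish k (.inr (by simpa using hk))).symm
    _ = _ := sum_congr rfl fun k _ => (hterm k).symm

theorem stirling_eq_coeff_pow (lam : ℝ) (n : ℕ) (S : ℕ → ℝ)
    (hS : ∀ j : ℕ, dff lam n j = ∑ k ∈ range (n + 1), S k * dff 1 k j) {m : ℕ} (hm : m ≤ n) :
    S m = n.factorial / m.factorial * coeff n ((degExp lam 1 - 1) ^ m) := by
  refine sub_eq_zero.mp (eq_zero_of_sum_mul_descFactorial_eq_zero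
    (c := fun k => S k - n.factorial / k.factorial * coeff n ((degExp lam 1 - 1) ^ k))
    (fun j => ?_) hm)
  rw [sum_congr rfl fun k _ => sub_mul _ _ _, sum_sub_distrib, ← dff_natCast_eq_sum]
  simp only [← dff_one_natCast, ← hS, sub_self]

end DegenerateStirling

theorem jindalrae_via_bell_general (lam : ℝ)
    (S2 : ℕ → ℕ → ℝ) (B J : ℕ → ℝ → ℝ)
    (hS2 : ∀ (n : ℕ) (x : ℝ), dff lam n x = ∑ k ∈ Finset.range (n + 1), S2 n k * dff 1 k x)
    (hB : ∀ x : ℝ, pscomp (degExp lam x) (degExp lam 1 - 1) = PowerSeries.mk (fun n => B n x / n.factorial))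
    (hJ : ∀ x : ℝ, pscomp (degExp lam x) (pscomp (degExp lam 1) (degExp lam 1 - 1) - 1) = PowerSeries.mk (fun n => J n x / n.factorial))
    : ∀ (n : ℕ) (x : ℝ), J n x = ∑ m ∈ Finset.range (n + 1), B m x * S2 n m := by
  intro n x
  have hg := constantCoeff_degExp_sub_one lam
  have hJB : pscomp (mk fun m => B m x / m.factorial) (degExp lam 1 - 1) =
      mk fun n => J n x / n.factorial := by
    rw [← hB x, pscomp_pscomp hg hg, pscomp_sub_one hg, hJ x]
  have hcoeff := congrArg (coeff n) hJB
  simp only [pscomp, coeff_mk] at hcoeff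
  rw [eq_div_iff (by positivity), sum_mul] at hcoeff
  rw [← hcoeff]
  refine sum_congr rfl fun m hm => ?_
  rw [stirling_eq_coeff_pow lam n (S2 n) (fun j => hS2 n j) (Nat.le_of_lt_succ (mem_range.mp hm))]
  field_simp

theorem jindalrae_via_bell (lam : ℝ) (hlam : lam ≠ 0)
    (S2 : ℕ → ℕ → ℝ) (B J : ℕ → ℝ → ℝ)
    (hS2 : ∀ (n : ℕ) (x : ℝ), dff lam n x = ∑ k ∈ Finset.range (n + 1), S2 n k * dff 1 k x)
    (hB : ∀ x : ℝ, pscomp (degExp lam x) (degExp lam 1 - 1) = PowerSeries.mk (fun n => B n x / n.factorial))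
    (hJ : ∀ x : ℝ, pscomp (degExp lam x) (pscomp (degExp lam 1) (degExp lam 1 - 1) - 1) = PowerSeries.mk (fun n => J n x / n.factorial))
    : ∀ (n : ℕ) (x : ℝ), J n x = ∑ m ∈ Finset.range (n + 1), B m x * S2 n m :=
  jindalrae_via_bell_general lam S2 B J hS2 hB hJ
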